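/- Let q be the spike-and-slab distribution ω·N(μ, σ²) + (1−ω)·δ₀ and p the spike-and-slab prior ρ·N(0,1) + (1−ρ)·δ₀, with ω, ρ ∈ (0,1). Then D_KL(q ‖ p) = ω·D_KL(N(μ,σ²) ‖ N(0,1)) + D_KL(Bernoulli(ω) ‖ Bernoulli(ρ)), i.e., D_KL(q ‖ p) = (ω/2)(σ² + μ² − 1 − log σ²) + ω log(ω/ρ) + (1−ω) log((1−ω)/(1−ρ)). -/

import Mathlib

open MeasureTheory ProbabilityTheory
open Real


lemma l_int_exp : ∫ x : ℝ, rexp (-x^2/2) = √(2*π) := by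
  have h := integral_gaussian (1/2)
  rw [show (fun x:ℝ => rexp (-x^2/2)) = fun x:ℝ => rexp (-(1/2)*x^2) by funext x; ring_nf, h,
    show π/(1/2) = 2*π by ring]

lemma l_integrable_exp : Integrable fun x : ℝ => rexp (-x^2/2) := by
  have h := integrable_exp_neg_mul_sq (b := 1/2) (by norm_num)
  rw [show (fun x:ℝ => rexp (-x^2/2)) = fun x:ℝ => rexp (-(1/2)*x^2) by funext x; ring_nf]
  exact h

lemma l_integrable_lin : Integrable fun x : ℝ => x * rexp (-x^2/2) := by
  have h := integrable_mul_exp_neg_mul_sq (b := 1/2) (by norm_num)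
  rw [show (fun x:ℝ => x * rexp (-x^2/2)) = fun x:ℝ => x * rexp (-(1/2)*x^2) by funext x; ring_nf]
  exact h

lemma l_integrable_sq : Integrable fun x : ℝ => x^2 * rexp (-x^2/2) := by
  have h := integrable_rpow_mul_exp_neg_mul_sq (b := 1/2) (by norm_num) (s := 2) (by norm_num)
  have h2 : ∀ x:ℝ, x ^ (2:ℝ) = x^2 := fun x => by
    rw [show (2:ℝ) = ((2:ℕ):ℝ) by norm_num, Real.rpow_natCast]
  simp only [h2] at h
  rw [show (fun x:ℝ => x^2 * rexp (-x^2/2)) = fun x:ℝ => x^2 * rexp (-(1/2)*x^2) by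
    funext x; ring_nf]
  exact h

lemma l_int_lin : ∫ x : ℝ, x * rexp (-x^2/2) = 0 := by
  have h := integral_neg_eq_self (fun x : ℝ => x * rexp (-x^2/2)) volume
  simp only [neg_sq, neg_mul] at h
  rw [integral_neg] at h
  linarith

lemma l_int_sq : ∫ x : ℝ, x^2 * rexp (-x^2/2) = √(2*π) := by
  have half := integral_rpow_mul_exp_neg_mul_rpow (p := 2) (q := 2) (b := 1/2)
    (by norm_num) (by norm_num) (by norm_num)
  have h2 : ∀ x:ℝ, x ^ (2:ℝ) = x^2 := fun x => by
    rw [show (2:ℝ) = ((2:ℕ):ℝ) by norm_num, Real.rpow_natCast]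
  simp only [h2] at half
  have half' : ∫ x in Set.Ioi (0:ℝ), x^2 * rexp (-x^2/2) = √(2*π)/2 := by
    rw [show (∫ x in Set.Ioi (0:ℝ), x^2 * rexp (-x^2/2))
        = ∫ x in Set.Ioi (0:ℝ), x^2 * rexp (-(1/2) * x^2) by
      congr 1; ext x; ring_nf]
    rw [half]
    rw [show ((2:ℝ)+1)/2 = 1/2 + 1 by norm_num, Real.Gamma_add_one (by norm_num),
      Real.Gamma_one_half_eq]
    have h12 : ((1:ℝ)/2) ^ (-((2:ℝ)+1)/2 : ℝ) = 2 * Real.sqrt 2 := by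
      rw [show (-((2:ℝ)+1)/2 : ℝ) = -(3/2) by norm_num, Real.rpow_neg (by norm_num), one_div,
        Real.inv_rpow (by norm_num), inv_inv,
        show (3/2:ℝ) = 1 + 1/2 by norm_num, Real.rpow_add (by norm_num), Real.rpow_one,
        ← Real.sqrt_eq_rpow]
    rw [h12, Real.sqrt_mul (by norm_num) π]
    ring
  calc ∫ x : ℝ, x^2 * rexp (-x^2/2) = ∫ x : ℝ, |x|^2 * rexp (-|x|^2/2) := by
        simp only [sq_abs]
    _ = 2 * ∫ x in Set.Ioi (0:ℝ), x^2 * rexp (-x^2/2) :=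
        integral_comp_abs (f := fun x => x^2 * rexp (-x^2/2))
    _ = √(2*π) := by rw [half']; ring



lemma l_integrable_poly (c₀ c₁ c₂ : ℝ) :
    Integrable fun y : ℝ => rexp (-y^2/2) * (c₀ + c₁*y + c₂*y^2) := by
  have : (fun y : ℝ => rexp (-y^2/2) * (c₀ + c₁*y + c₂*y^2))
      = fun y : ℝ => c₀ * rexp (-y^2/2) + c₁ * (y * rexp (-y^2/2)) + c₂ * (y^2 * rexp (-y^2/2)) := by
    funext y; ring
  rw [this]
  exact ((l_integrable_exp.const_mul c₀).add (l_integrable_lin.const_mul c₁)).add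
    (l_integrable_sq.const_mul c₂)

lemma l_int_poly (c₀ c₁ c₂ : ℝ) :
    ∫ y : ℝ, rexp (-y^2/2) * (c₀ + c₁*y + c₂*y^2) = √(2*π) * (c₀ + c₂) := by
  have : (fun y : ℝ => rexp (-y^2/2) * (c₀ + c₁*y + c₂*y^2))
      = fun y : ℝ => c₀ * rexp (-y^2/2) + c₁ * (y * rexp (-y^2/2)) + c₂ * (y^2 * rexp (-y^2/2)) := by
    funext y; ring
  have hA : Integrable (fun y:ℝ => c₀ * rexp (-y^2/2)) := l_integrable_exp.const_mul c₀
  have hB : Integrable (fun y:ℝ => c₁ * (y * rexp (-y^2/2))) := l_integrable_lin.const_mul c₁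
  have hC : Integrable (fun y:ℝ => c₂ * (y^2 * rexp (-y^2/2))) := l_integrable_sq.const_mul c₂
  have hAB : Integrable (fun y:ℝ => c₀ * rexp (-y^2/2) + c₁ * (y * rexp (-y^2/2))) := hA.add hB
  rw [this, integral_add hAB hC, integral_add hA hB,
    integral_const_mul, integral_const_mul, integral_const_mul, l_int_exp, l_int_lin, l_int_sq]
  ring

/-- ψ-function: integrand after change of variables. -/
noncomputable def psiFun (m σ C : ℝ) (y : ℝ) : ℝ :=
  (√(2*π*σ^2))⁻¹ * (rexp (-y^2/2) * (C + (m + σ*y)^2/2 - y^2/2))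

lemma psiFun_eq (m σ C : ℝ) : psiFun m σ C
    = fun y => (√(2*π*σ^2))⁻¹ * (rexp (-y^2/2)
        * ((C + m^2/2) + (m*σ)*y + ((σ^2-1)/2)*y^2)) := by
  funext y; unfold psiFun; ring_nf

lemma l_integrable_psi (m σ C : ℝ) : Integrable (psiFun m σ C) := by
  rw [psiFun_eq]
  exact (l_integrable_poly _ _ _).const_mul _

lemma l_int_psi (m σ C : ℝ) (hσ : 0 < σ) :
    ∫ y : ℝ, psiFun m σ C y = σ⁻¹ * (C + (m^2 + σ^2 - 1)/2) := by
  rw [psiFun_eq]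
  rw [integral_const_mul, l_int_poly]
  have hs : √(2*π*σ^2) = √(2*π) * σ := by
    rw [Real.sqrt_mul (by positivity), Real.sqrt_sq hσ.le]
  rw [hs, mul_inv]
  have h2π : √(2*π) ≠ 0 := by positivity
  field_simp
  ring

/-- integrand over the slab equals psiFun ∘ affine -/
lemma slab_eq (m σ C : ℝ) (hσ : 0 < σ) (x : ℝ) :
    (√(2*π*σ^2))⁻¹ * rexp (-(x-m)^2/(2*σ^2)) * (C + x^2/2 - (x-m)^2/(2*σ^2))
      = psiFun m σ C ((x - m)/σ) := by
  unfold psiFun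
  have h1 : -((x-m)/σ)^2/2 = -(x-m)^2/(2*σ^2) := by
    rw [div_pow]; field_simp
  have h2 : m + σ * ((x-m)/σ) = x := by field_simp; ring
  rw [h1, h2]
  have h3 : ((x-m)/σ)^2/2 = (x-m)^2/(2*σ^2) := by rw [div_pow]; field_simp
  rw [h3]; ring

lemma l_integrable_slab (m σ C : ℝ) (hσ : 0 < σ) :
    Integrable fun x : ℝ =>
      (√(2*π*σ^2))⁻¹ * rexp (-(x-m)^2/(2*σ^2)) * (C + x^2/2 - (x-m)^2/(2*σ^2)) := by
  simp only [slab_eq m σ C hσ]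
  have h1 : Integrable fun x : ℝ => psiFun m σ C (x/σ) :=
    (l_integrable_psi m σ C).comp_div hσ.ne'
  have h2 := h1.comp_sub_right m
  simpa [sub_div] using h2

lemma l_int_slab (m σ C : ℝ) (hσ : 0 < σ) :
    ∫ x : ℝ, (√(2*π*σ^2))⁻¹ * rexp (-(x-m)^2/(2*σ^2)) * (C + x^2/2 - (x-m)^2/(2*σ^2))
      = C + (m^2 + σ^2 - 1)/2 := by
  simp only [slab_eq m σ C hσ]
  have h1 : ∫ x : ℝ, psiFun m σ C ((x - m)/σ) = ∫ x : ℝ, psiFun m σ C (x/σ) := by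
    have := integral_sub_right_eq_self (μ := volume) (fun x => psiFun m σ C (x/σ)) m
    simpa [sub_div] using this
  rw [h1, Measure.integral_comp_div (psiFun m σ C) σ, l_int_psi m σ C hσ, abs_of_pos hσ, smul_eq_mul]
  field_simp



/-- The KL divergence between the spike-and-slab distribution
`q = ω N(μ, σ²) + (1−ω) δ₀` and the spike-and-slab prior `p = ρ N(0,1) + (1−ρ) δ₀`,
computed with densities with respect to the reference measure `Lebesgue + δ₀`, equals
`(ω/2)(σ² + μ² − 1 − log σ²) + ω log(ω/ρ) + (1−ω) log((1−ω)/(1−ρ))`. -/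
theorem stmt5 (m σ ω ρ : ℝ) (hσ : 0 < σ) (hω0 : 0 < ω) (hω1 : ω < 1)
    (hρ0 : 0 < ρ) (hρ1 : ρ < 1) :
    (∫ x : ℝ,
        (if x = 0 then (1 - ω) else ω * gaussianPDFReal m ⟨σ ^ 2, sq_nonneg σ⟩ x) *
          Real.log
            ((if x = 0 then (1 - ω) else ω * gaussianPDFReal m ⟨σ ^ 2, sq_nonneg σ⟩ x) /
              (if x = 0 then (1 - ρ) else ρ * gaussianPDFReal 0 1 x))
        ∂(volume + Measure.dirac 0))
      = (ω / 2) * (σ ^ 2 + m ^ 2 - 1 - Real.log (σ ^ 2))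
        + ω * Real.log (ω / ρ) + (1 - ω) * Real.log ((1 - ω) / (1 - ρ)) := by
  set C : ℝ := Real.log ω - Real.log ρ - Real.log σ with hC
  have hg : ∀ x, gaussianPDFReal m ⟨σ ^ 2, sq_nonneg σ⟩ x
      = (√(2*π*σ^2))⁻¹ * rexp (-(x-m)^2/(2*σ^2)) := fun x => by
    simp [gaussianPDFReal, NNReal.coe_mk]; rfl
  have hh : ∀ x, gaussianPDFReal 0 1 x = (√(2*π))⁻¹ * rexp (-x^2/2) := fun x => by
    simp [gaussianPDFReal]
  set F : ℝ → ℝ := fun x =>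
    (if x = 0 then (1 - ω) else ω * gaussianPDFReal m ⟨σ ^ 2, sq_nonneg σ⟩ x) *
      Real.log
        ((if x = 0 then (1 - ω) else ω * gaussianPDFReal m ⟨σ ^ 2, sq_nonneg σ⟩ x) /
          (if x = 0 then (1 - ρ) else ρ * gaussianPDFReal 0 1 x)) with hF
  set E : ℝ → ℝ := fun x =>
    ω * ((√(2*π*σ^2))⁻¹ * rexp (-(x-m)^2/(2*σ^2)) * (C + x^2/2 - (x-m)^2/(2*σ^2))) with hE
  -- positivity facts
  have hsqrt2π : (0:ℝ) < √(2*π) := Real.sqrt_pos.mpr (by positivity)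
  have hsplit : √(2*π*σ^2) = √(2*π) * σ := by
    rw [Real.sqrt_mul (by positivity), Real.sqrt_sq hσ.le]
  have hsqrtσ : (0:ℝ) < √(2*π*σ^2) := by rw [hsplit]; positivity
  -- pointwise equality away from 0
  have hpt : ∀ x : ℝ, x ≠ 0 → F x = E x := by
    intro x hx
    simp only [hF, hE, if_neg hx, hg, hh]
    have hlog : Real.log ((ω * ((√(2*π*σ^2))⁻¹ * rexp (-(x-m)^2/(2*σ^2))))
        / (ρ * ((√(2*π))⁻¹ * rexp (-x^2/2))))
        = C + x^2/2 - (x-m)^2/(2*σ^2) := by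
      rw [Real.log_div (by positivity) (by positivity),
        Real.log_mul hω0.ne' (by positivity), Real.log_mul hρ0.ne' (by positivity),
        Real.log_mul (by positivity) (Real.exp_ne_zero _),
        Real.log_mul (by positivity) (Real.exp_ne_zero _),
        Real.log_exp, Real.log_exp, Real.log_inv, Real.log_inv, hsplit,
        Real.log_mul hsqrt2π.ne' hσ.ne', hC]
      ring
    rw [hlog]
    ring
  have h0 : ∀ᵐ x : ℝ ∂volume, x ≠ 0 := by
    rw [ae_iff]
    have hs : {x : ℝ | ¬ x ≠ 0} = {0} := by ext x; simp
    rw [hs, Real.volume_singleton]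
  have hae : F =ᵐ[volume] E := by filter_upwards [h0] with x hx using hpt x hx
  -- integrability
  have hEint : Integrable E volume := (l_integrable_slab m σ C hσ).const_mul ω
  have hFvol : Integrable F volume := hEint.congr hae.symm
  have hFmeas : Measurable F := by
    have hset : MeasurableSet {x : ℝ | x = 0} := by
      simpa [Set.setOf_eq_eq_singleton] using measurableSet_singleton (0:ℝ)
    have m1 : Measurable fun x : ℝ =>
        (if x = 0 then (1 - ω) else ω * gaussianPDFReal m ⟨σ ^ 2, sq_nonneg σ⟩ x) :=
      Measurable.ite hset measurable_const ((measurable_gaussianPDFReal m _).const_mul ω)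
    have m2 : Measurable fun x : ℝ => (if x = 0 then (1 - ρ) else ρ * gaussianPDFReal 0 1 x) :=
      Measurable.ite hset measurable_const ((measurable_gaussianPDFReal 0 1).const_mul ρ)
    exact m1.mul ((m1.div m2).log)
  have hFdirac : Integrable F (Measure.dirac 0) := by
    refine ⟨hFmeas.aestronglyMeasurable, ?_⟩
    rw [HasFiniteIntegral, lintegral_dirac' _ (by measurability)]
    exact ENNReal.coe_lt_top
  rw [integral_add_measure hFvol hFdirac, integral_congr_ae hae]
  have hvol : ∫ x, E x = ω * (C + (m^2 + σ^2 - 1)/2) := by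
    rw [hE, integral_const_mul, l_int_slab m σ C hσ]
  have hdir : ∫ x, F x ∂Measure.dirac 0 = (1 - ω) * Real.log ((1 - ω)/(1 - ρ)) := by
    rw [integral_dirac]
    simp [hF]
  rw [hvol, hdir, hC, Real.log_div hω0.ne' hρ0.ne',
    show (σ:ℝ)^2 = σ^(2:ℕ) from rfl, Real.log_pow]
  push_cast
  ring
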